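/- Let (ω_e)_{e∈(0,1]} be real numbers with |ω_e| ≤ C, and suppose (c_m(e))_{m∈ℤ³} ⊂ ℂ satisfies Σ_m |c_m(e)|² = Z > 0 and Σ_m ((1/2)|2πm|² − ω_e)² |c_m(e)|² ≤ C'e⁴. Let λ_e be a value of |2πm|² minimizing |(1/2)|2πm|² − ω_e| over m ∈ ℤ³. Then for sufficiently small e: (i) Σ_{|2πm|² ≠ λ_e} |c_m(e)|² = O(e⁴), and (ii) |(1/2)λ_e − ω_e| = O(e²). -/
import Mathlib


open Real

noncomputable section

/-- The point of `ℝ³` corresponding to a lattice point `m ∈ ℤ³`. -/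
def latticeVec (m : Fin 3 → ℤ) : EuclideanSpace ℝ (Fin 3) :=
  (EuclideanSpace.equiv (Fin 3) ℝ).symm (fun i => (m i : ℝ))

lemma normsq_lattice (m : Fin 3 → ℤ) :
    ‖(2 * π) • latticeVec m‖ ^ 2 = 4 * π ^ 2 * (((m 0)^2 + (m 1)^2 + (m 2)^2 : ℤ) : ℝ) := by
  rw [norm_smul, mul_pow, EuclideanSpace.norm_eq, Real.sq_sqrt (by positivity)]
  simp only [latticeVec, Fin.sum_univ_three, Real.norm_eq_abs, sq_abs]
  push_cast
  ring_nf
  simp [latticeVec, Fin.sum_univ_three, sq_abs]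

lemma lattice_gap (m m' : Fin 3 → ℤ)
    (h : ‖(2 * π) • latticeVec m‖ ^ 2 ≠ ‖(2 * π) • latticeVec m'‖ ^ 2) :
    4 * π ^ 2 ≤ |‖(2 * π) • latticeVec m‖ ^ 2 - ‖(2 * π) • latticeVec m'‖ ^ 2| := by
  rw [normsq_lattice, normsq_lattice] at *
  set a : ℤ := (m 0)^2 + (m 1)^2 + (m 2)^2
  set b : ℤ := (m' 0)^2 + (m' 1)^2 + (m' 2)^2
  have hab : a ≠ b := by
    intro he; apply h; rw [he]
  have h1 : (1 : ℝ) ≤ |(a : ℝ) - (b : ℝ)| := by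
    have : (1 : ℤ) ≤ |a - b| := by
      rcases lt_or_gt_of_ne (sub_ne_zero.mpr hab) with h'|h'
      · rw [abs_of_neg h']; omega
      · rw [abs_of_pos h']; omega
    calc (1:ℝ) ≤ ((|a - b| : ℤ) : ℝ) := by exact_mod_cast this
    _ = |(a:ℝ) - (b:ℝ)| := by push_cast; ring_nf
  have hpi : (0:ℝ) < 4 * π ^ 2 := by positivity
  calc 4 * π ^ 2 = 4 * π ^ 2 * 1 := by ring
  _ ≤ 4 * π ^ 2 * |(a:ℝ) - (b:ℝ)| := by nlinarith
  _ = |4 * π ^ 2 * ((a:ℝ)) - 4 * π ^ 2 * ((b:ℝ))| := by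
      rw [← mul_sub, abs_mul, abs_of_pos hpi]

set_option maxHeartbeats 1000000 in
/-- Spectral concentration for the small-charge ground state: if the frequencies `ω_e` are
bounded, the coefficients are normalized `Σ|c_m|² = Z > 0`, and
`Σ ((1/2)|2πm|² − ω_e)²|c_m|² ≤ C'e⁴`, then for `λ_e` minimizing `|(1/2)|2πm|² − ω_e|` one has
`Σ_{|2πm|²≠λ_e}|c_m|² = O(e⁴)` and `|(1/2)λ_e − ω_e| = O(e²)` for small `e`. -/
theorem spectral_concentration
    (ω : ℝ → ℝ) (c : ℝ → (Fin 3 → ℤ) → ℂ) (lam : ℝ → ℝ) (Z C C' : ℝ)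
    (hZ : 0 < Z)
    (hω : ∀ e ∈ Set.Ioc (0 : ℝ) 1, |ω e| ≤ C)
    (hnorm : ∀ e ∈ Set.Ioc (0 : ℝ) 1, HasSum (fun m : Fin 3 → ℤ => ‖c e m‖ ^ 2) Z)
    (hsum2 : ∀ e ∈ Set.Ioc (0 : ℝ) 1,
      Summable (fun m : Fin 3 → ℤ =>
        ((1 / 2 : ℝ) * ‖(2 * π) • latticeVec m‖ ^ 2 - ω e) ^ 2 * ‖c e m‖ ^ 2))
    (hbound : ∀ e ∈ Set.Ioc (0 : ℝ) 1,
      (∑' m : Fin 3 → ℤ,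
        ((1 / 2 : ℝ) * ‖(2 * π) • latticeVec m‖ ^ 2 - ω e) ^ 2 * ‖c e m‖ ^ 2)
        ≤ C' * e ^ 4)
    (hlam_mem : ∀ e ∈ Set.Ioc (0 : ℝ) 1,
      ∃ m : Fin 3 → ℤ, lam e = ‖(2 * π) • latticeVec m‖ ^ 2)
    (hlam_min : ∀ e ∈ Set.Ioc (0 : ℝ) 1, ∀ m : Fin 3 → ℤ,
      |(1 / 2 : ℝ) * lam e - ω e| ≤ |(1 / 2 : ℝ) * ‖(2 * π) • latticeVec m‖ ^ 2 - ω e|) :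
    ∃ e₀ > (0 : ℝ), ∃ C₁ : ℝ, ∀ e ∈ Set.Ioc (0 : ℝ) 1, e ≤ e₀ →
      (∑' m : Fin 3 → ℤ,
          if ‖(2 * π) • latticeVec m‖ ^ 2 ≠ lam e then ‖c e m‖ ^ 2 else 0) ≤ C₁ * e ^ 4 ∧
      |(1 / 2 : ℝ) * lam e - ω e| ≤ C₁ * e ^ 2 := by
  have hpi : (0:ℝ) < π := Real.pi_pos
  refine ⟨1, one_pos, C' / π ^ 4 + Real.sqrt (C' / Z), ?_⟩
  intro e he _
  have hC' : 0 ≤ C' := by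
    have h1 : (1:ℝ) ∈ Set.Ioc (0:ℝ) 1 := ⟨one_pos, le_refl _⟩
    have := le_trans (tsum_nonneg (fun m => by positivity)) (hbound 1 h1)
    nlinarith
  have hsum := hsum2 e he
  have hn := hnorm e he
  have hb := hbound e he
  obtain ⟨m', hm'⟩ := hlam_mem e he
  set f : (Fin 3 → ℤ) → ℝ :=
    fun m => if ‖(2 * π) • latticeVec m‖ ^ 2 ≠ lam e then ‖c e m‖ ^ 2 else 0 with hf
  set g : (Fin 3 → ℤ) → ℝ :=
    fun m => ((1 / 2 : ℝ) * ‖(2 * π) • latticeVec m‖ ^ 2 - ω e) ^ 2 * ‖c e m‖ ^ 2 with hg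
  have hf_nonneg : ∀ m, 0 ≤ f m := fun m => by
    simp only [hf]; split <;> positivity
  have hf_le : ∀ m, f m ≤ ‖c e m‖ ^ 2 := fun m => by
    simp only [hf]; split
    exacts [le_refl _, by positivity]
  have hf_summ : Summable f := Summable.of_nonneg_of_le hf_nonneg hf_le hn.summable
  -- pointwise key bound
  have key : ∀ m, π ^ 4 * f m ≤ g m := by
    intro m
    simp only [hf, hg]
    split
    · rename_i hne
      have hgap : 4 * π ^ 2 ≤ |‖(2 * π) • latticeVec m‖ ^ 2 - ‖(2 * π) • latticeVec m'‖ ^ 2| := by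
        apply lattice_gap
        rw [← hm']; exact hne
      rw [← hm'] at hgap
      have hmin := hlam_min e he m
      have htri : |‖(2 * π) • latticeVec m‖ ^ 2 - lam e| ≤
          2 * (|(1 / 2 : ℝ) * ‖(2 * π) • latticeVec m‖ ^ 2 - ω e| +
            |(1 / 2 : ℝ) * lam e - ω e|) := by
        have := abs_sub ((1 / 2 : ℝ) * ‖(2 * π) • latticeVec m‖ ^ 2 - ω e)
          ((1 / 2 : ℝ) * lam e - ω e)
        have h2 : ‖(2 * π) • latticeVec m‖ ^ 2 - lam e =
            2 * (((1 / 2 : ℝ) * ‖(2 * π) • latticeVec m‖ ^ 2 - ω e) -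
              ((1 / 2 : ℝ) * lam e - ω e)) := by ring
        rw [h2, abs_mul, abs_two]
        nlinarith [abs_sub_abs_le_abs_sub ((1 / 2 : ℝ) * ‖(2 * π) • latticeVec m‖ ^ 2 - ω e)
          ((1 / 2 : ℝ) * lam e - ω e),
          abs_sub_le ((1 / 2 : ℝ) * ‖(2 * π) • latticeVec m‖ ^ 2 - ω e) 0
            ((1 / 2 : ℝ) * lam e - ω e)]
      have hD : π ^ 2 ≤ |(1 / 2 : ℝ) * ‖(2 * π) • latticeVec m‖ ^ 2 - ω e| := by
        nlinarith
      have hs := sq_abs ((1 / 2 : ℝ) * ‖(2 * π) • latticeVec m‖ ^ 2 - ω e)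
      have hDD : π ^ 2 * π ^ 2 ≤
          |(1 / 2 : ℝ) * ‖(2 * π) • latticeVec m‖ ^ 2 - ω e| *
          |(1 / 2 : ℝ) * ‖(2 * π) • latticeVec m‖ ^ 2 - ω e| :=
        mul_le_mul hD hD (by positivity) (abs_nonneg _)
      nlinarith [hDD, hs, sq_nonneg (‖c e m‖)]
    · rw [mul_zero]; positivity
  have hπ4 : (0:ℝ) < π ^ 4 := by positivity
  constructor
  · -- part (i)
    have h1 : π ^ 4 * (∑' m, f m) ≤ ∑' m, g m := by
      rw [← tsum_mul_left]
      exact Summable.tsum_le_tsum key (hf_summ.mul_left _) hsum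
    have h2 : π ^ 4 * (∑' m, f m) ≤ C' * e ^ 4 := le_trans h1 hb
    have hsq : (0:ℝ) ≤ Real.sqrt (C' / Z) := Real.sqrt_nonneg _
    have he4 : (0:ℝ) ≤ e ^ 4 := by positivity
    calc (∑' m, f m) ≤ C' / π ^ 4 * e ^ 4 := by
          rw [div_mul_eq_mul_div, le_div_iff₀ hπ4]; nlinarith
    _ ≤ (C' / π ^ 4 + Real.sqrt (C' / Z)) * e ^ 4 := by nlinarith
  · -- part (ii)
    set A := |(1 / 2 : ℝ) * lam e - ω e| with hA
    have hA0 : 0 ≤ A := abs_nonneg _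
    have hpt : ∀ m, A ^ 2 * ‖c e m‖ ^ 2 ≤ g m := by
      intro m
      have hmin := hlam_min e he m
      have h1 := sq_abs ((1 / 2 : ℝ) * ‖(2 * π) • latticeVec m‖ ^ 2 - ω e)
      have h2 : A ^ 2 ≤ |(1 / 2 : ℝ) * ‖(2 * π) • latticeVec m‖ ^ 2 - ω e| ^ 2 :=
        pow_le_pow_left₀ hA0 hmin 2
      have := sq_nonneg (‖c e m‖)
      simp only [hg]
      nlinarith
    have hAs : A ^ 2 * Z ≤ ∑' m, g m := by
      have := (hn.mul_left (A ^ 2)).tsum_eq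
      calc A ^ 2 * Z = ∑' m, A ^ 2 * ‖c e m‖ ^ 2 := this.symm
      _ ≤ ∑' m, g m := Summable.tsum_le_tsum hpt (hn.mul_left (A ^ 2)).summable hsum
    have hA2 : A ^ 2 ≤ C' / Z * e ^ 4 := by
      rw [div_mul_eq_mul_div, le_div_iff₀ hZ]
      nlinarith
    have hA' : A ≤ Real.sqrt (C' / Z * (e ^ 2) ^ 2) := by
      rw [← Real.sqrt_sq hA0]
      apply Real.sqrt_le_sqrt
      nlinarith [hA2]
    have hsqrt : Real.sqrt (C' / Z * (e ^ 2) ^ 2) = Real.sqrt (C' / Z) * e ^ 2 := by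
      rw [Real.sqrt_mul (div_nonneg hC' hZ.le) ((e ^ 2) ^ 2), Real.sqrt_sq (sq_nonneg e)]
    calc A ≤ Real.sqrt (C' / Z) * e ^ 2 := by rw [hsqrt] at hA'; exact hA'
    _ ≤ (C' / π ^ 4 + Real.sqrt (C' / Z)) * e ^ 2 := by
          have : 0 ≤ C' / π ^ 4 := by positivity
          nlinarith [sq_nonneg e]

end
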